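/- arXiv:1707.08044 — 8 statements merged into one kernel-verified Lean document; each statement's English description precedes it below -/
import Mathlib

section
/- Let H be a finite-dimensional unimodular Hopf algebra with right integral λ ∈ H*. Then λ is a quantum character: λ(xy) = λ(S²(y)x) for all x, y ∈ H. -/
/-!
Since `λ` is a two-sided integral, `u₁ λ(x u₂) = λ(x₂ u) S(x₁)` and `λ(u₁ x) u₂ = λ(u x₁) S(x₂)`
for all `u, x`. For the two-sided cointegral `u = Λ` they read `Λ₁ λ(x Λ₂) = λ(Λ) S(x)` and
`λ(Λ₁ x) Λ₂ = λ(Λ) S(x)`, and pairing them gives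
`λ(Λ) λ(S(a) b) = λ(a Λ₂) λ(Λ₁ b) = λ(Λ) λ(a S(b))`.

The scalar `λ(Λ)` is nonzero. Otherwise, writing `ΔΛ = ∑ eᵢ ⊗ cᵢ` over a basis `(eᵢ)`, the first
identity puts every `cᵢ` in the radical `{u | ∀ x, λ(x u) = 0}`. For `u` in the radical the same
identity puts the second legs of `Δu` in the radical, so `λ(x) ε(u) = λ(x S(u₁) u₂) = 0`: `ε`
vanishes on the radical, and `Λ = ∑ ε(cᵢ) eᵢ = 0`.

Hence `λ(S(a) b) = λ(a S(b))`, in particular `λ ∘ S = λ`. As `S⁴ = id`, every `x` is some `S(a)`,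
and `λ(x y) = λ(a S(y)) = λ(S(a S(y))) = λ(S²(y) x)`.
-/

open TensorProduct

/-- Convolution product on the dual of a Hopf algebra: `(f * g)(x) = f(x₍₁₎) g(x₍₂₎)`. -/
noncomputable def conv {k H : Type} [Field k] [Ring H] [HopfAlgebra k H]
    (f g : H →ₗ[k] k) : H →ₗ[k] k :=
  (LinearMap.mul' k k) ∘ₗ (TensorProduct.map f g) ∘ₗ (Coalgebra.comul (R := k) (A := H))

open Coalgebra HopfAlgebra

namespace Coalgebra

section

variable {R A ι : Type*} [CommSemiring R] [AddCommMonoid A] [Module R A] [Coalgebra R A]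

lemma sum_smul_counit {a : A} (r : Repr R a ι) :
    ∑ i ∈ r.index, counit (R := R) (r.right i) • r.left i = a := by
  simpa only [map_sum, TensorProduct.rid_tmul, one_smul] using
    congr(TensorProduct.rid R R A $(sum_tmul_counit_eq r))

lemma exists_repr_left_eq_basis (b : Module.Basis ι R A) (a : A) :
    ∃ r : Repr R a ι, r.left = b := by
  obtain ⟨c, hc⟩ := TensorProduct.eq_repr_basis_left b (comul (R := R) a)
  exact ⟨⟨c.support, b, c, hc⟩, rfl⟩

end

variable {R A ι : Type*} {κ μ : ι → Type*} [CommSemiring R] [Semiring A] [Bialgebra R A]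

lemma sum_mul_mul_coassoc (f g h : A →ₗ[R] A) {a : A} (r : Repr R a ι)
    (r₁ : ∀ i, Repr R (r.left i) (κ i)) (r₂ : ∀ i, Repr R (r.right i) (μ i)) :
    ∑ i ∈ r.index, ∑ j ∈ (r₁ i).index, f ((r₁ i).left j) * (g ((r₁ i).right j) * h (r.right i)) =
    ∑ i ∈ r.index, ∑ j ∈ (r₂ i).index, f (r.left i) * (g ((r₂ i).left j) * h ((r₂ i).right j)) := by
  simpa [map_sum] using congr(LinearMap.mul' R A (LinearMap.lTensor A (LinearMap.mul' R A)
    $(sum_map_tmul_tmul_eq f g h a (a₁ := r₁) (a₂ := r₂)))).symm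

end Coalgebra

variable {k H : Type} [Field k] [Ring H] [HopfAlgebra k H] {lam : H →ₗ[k] k} {ι κ : Type*}

lemma conv_apply {f g : H →ₗ[k] k} {x : H} (r : Repr k x ι) :
    conv f g x = ∑ i ∈ r.index, f (r.left i) * g (r.right i) := by
  simp [conv, ← r.eq]

lemma sum_lam_right_smul_left (hri : ∀ f : H →ₗ[k] k, conv f lam = f 1 • lam) {x : H}
    (r : Repr k x ι) : ∑ i ∈ r.index, lam (r.right i) • r.left i = lam x • 1 := by
  refine Module.eval_apply_injective k (LinearMap.ext fun f => ?_)
  simpa [conv_apply r, mul_comm] using congr($(hri f) x)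

lemma sum_lam_left_smul_right (hmod : ∀ f : H →ₗ[k] k, conv lam f = f 1 • lam) {x : H}
    (r : Repr k x ι) : ∑ i ∈ r.index, lam (r.left i) • r.right i = lam x • 1 := by
  refine Module.eval_apply_injective k (LinearMap.ext fun f => ?_)
  simpa [conv_apply r, mul_comm] using congr($(hmod f) x)

lemma sum_lam_mul_smul_left (hri : ∀ f : H →ₗ[k] k, conv f lam = f 1 • lam) {x u : H}
    (rx : Repr k x ι) (ru : Repr k u κ) :
    ∑ m ∈ ru.index, lam (x * ru.right m) • ru.left m =
      ∑ i ∈ rx.index, lam (rx.right i * u) • antipode k (rx.left i) := by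
  let G : H →ₗ[k] H :=
    ∑ m ∈ ru.index, (lam ∘ₗ LinearMap.mulRight k (ru.right m)).smulRight (ru.left m)
  have hG : ∀ z, G z = ∑ m ∈ ru.index, lam (z * ru.right m) • ru.left m := by simp [G]
  symm
  calc ∑ i ∈ rx.index, lam (rx.right i * u) • antipode k (rx.left i)
      = ∑ i ∈ rx.index, ∑ j ∈ (ℛ k (rx.right i)).index, antipode k (rx.left i) *
          (LinearMap.id (R := k) ((ℛ k (rx.right i)).left j) *
            G ((ℛ k (rx.right i)).right j)) := by
        refine Finset.sum_congr rfl fun i _ => ?_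
        have := sum_lam_right_smul_left hri ((ℛ k (rx.right i)).mul ru)
        simp only [Repr.mul_index, Repr.mul_left, Repr.mul_right, Finset.sum_product] at this
        rw [← mul_one (antipode k (rx.left i)), ← mul_smul_comm, ← this]
        simp only [hG, LinearMap.id_apply, Finset.mul_sum, mul_smul_comm, mul_assoc, one_mul]
    _ = ∑ i ∈ rx.index, ∑ j ∈ (ℛ k (rx.left i)).index, antipode k ((ℛ k (rx.left i)).left j) *
          (LinearMap.id (R := k) ((ℛ k (rx.left i)).right j) * G (rx.right i)) :=
        (sum_mul_mul_coassoc _ _ _ rx _ _).symm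
    _ = ∑ i ∈ rx.index, counit (R := k) (rx.left i) • G (rx.right i) := by
        refine Finset.sum_congr rfl fun i _ => ?_
        simp only [LinearMap.id_apply, ← mul_assoc, ← Finset.sum_mul,
          sum_antipode_mul_eq_smul, smul_mul_assoc, one_mul]
    _ = G x := by
        conv_rhs => rw [← sum_counit_smul rx]
        simp only [map_sum, map_smul]
    _ = _ := hG x

lemma sum_lam_mul_smul_right (hmod : ∀ f : H →ₗ[k] k, conv lam f = f 1 • lam) {x u : H}
    (rx : Repr k x ι) (ru : Repr k u κ) :
    ∑ m ∈ ru.index, lam (ru.left m * x) • ru.right m =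
      ∑ i ∈ rx.index, lam (u * rx.left i) • antipode k (rx.right i) := by
  let G : H →ₗ[k] H :=
    ∑ m ∈ ru.index, (lam ∘ₗ LinearMap.mulLeft k (ru.left m)).smulRight (ru.right m)
  have hG : ∀ z, G z = ∑ m ∈ ru.index, lam (ru.left m * z) • ru.right m := by simp [G]
  symm
  calc ∑ i ∈ rx.index, lam (u * rx.left i) • antipode k (rx.right i)
      = ∑ i ∈ rx.index, ∑ j ∈ (ℛ k (rx.left i)).index, G ((ℛ k (rx.left i)).left j) *
          (LinearMap.id (R := k) ((ℛ k (rx.left i)).right j) * antipode k (rx.right i)) := by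
        refine Finset.sum_congr rfl fun i _ => ?_
        have := sum_lam_left_smul_right hmod (ru.mul (ℛ k (rx.left i)))
        simp only [Repr.mul_index, Repr.mul_left, Repr.mul_right, Finset.sum_product] at this
        rw [← one_mul (antipode k (rx.right i)), ← smul_mul_assoc, ← this, Finset.sum_comm]
        simp only [hG, LinearMap.id_apply, Finset.sum_mul, smul_mul_assoc, mul_assoc, one_mul]
    _ = ∑ i ∈ rx.index, ∑ j ∈ (ℛ k (rx.right i)).index, G (rx.left i) *
          (LinearMap.id (R := k) ((ℛ k (rx.right i)).left j) *
            antipode k ((ℛ k (rx.right i)).right j)) :=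
        sum_mul_mul_coassoc _ _ _ rx _ _
    _ = ∑ i ∈ rx.index, counit (R := k) (rx.right i) • G (rx.left i) := by
        refine Finset.sum_congr rfl fun i _ => ?_
        simp only [LinearMap.id_apply, ← Finset.mul_sum, sum_mul_antipode_eq_smul, mul_smul_comm,
          mul_one]
    _ = G x := by
        conv_rhs => rw [← sum_smul_counit rx]
        simp only [map_sum, map_smul]
    _ = _ := hG x

lemma exists_repr_forall_lam_mul_right_eq_zero {w : H}
    (hw : ∀ {ι : Type} (r : Repr k w ι) (x : H),
      ∑ i ∈ r.index, lam (x * r.right i) • r.left i = 0) :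
    ∃ (ι : Type) (r : Repr k w ι), ∀ i ∈ r.index, ∀ x, lam (x * r.right i) = 0 := by
  let b := Module.Free.chooseBasis k H
  obtain ⟨r, hr⟩ := exists_repr_left_eq_basis b w
  refine ⟨_, r, fun i hi x => ?_⟩
  have := hw r x
  rw [hr] at this
  exact linearIndependent_iff'.mp b.linearIndependent _ _ this i hi

lemma counit_eq_zero_of_forall_lam_mul_eq_zero (hlam : lam ≠ 0)
    (hri : ∀ f : H →ₗ[k] k, conv f lam = f 1 • lam) {u : H} (hu : ∀ x, lam (x * u) = 0) :
    counit (R := k) u = 0 := by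
  obtain ⟨ι, r, hr⟩ := exists_repr_forall_lam_mul_right_eq_zero (lam := lam) (w := u)
    fun r x => by simp [sum_lam_mul_smul_left hri (ℛ k x) r, hu]
  obtain ⟨x, hx⟩ : ∃ x, lam x ≠ 0 := by
    by_contra! h
    exact hlam (LinearMap.ext h)
  have : lam x * counit (R := k) u = 0 :=
    calc lam x * counit (R := k) u = lam (x * (counit (R := k) u • 1)) := by simp [mul_comm]
      _ = ∑ i ∈ r.index, lam (x * antipode k (r.left i) * r.right i) := by
        simp only [← sum_antipode_mul_eq_smul r, Finset.mul_sum, map_sum, mul_assoc]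
      _ = 0 := Finset.sum_eq_zero fun i hi => hr i hi _
  exact (mul_eq_zero.mp this).resolve_left hx

lemma eq_zero_of_forall_sum_lam_mul_smul_eq_zero (hlam : lam ≠ 0)
    (hri : ∀ f : H →ₗ[k] k, conv f lam = f 1 • lam) {w : H}
    (hw : ∀ {ι : Type} (r : Repr k w ι) (x : H),
      ∑ i ∈ r.index, lam (x * r.right i) • r.left i = 0) : w = 0 := by
  obtain ⟨ι, r, hr⟩ := exists_repr_forall_lam_mul_right_eq_zero hw
  rw [← sum_smul_counit r]
  refine Finset.sum_eq_zero fun i hi => ?_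
  rw [counit_eq_zero_of_forall_lam_mul_eq_zero hlam hri (hr i hi), zero_smul]

section Cointegral

variable {Λ : H}

lemma sum_lam_mul_smul_left_of_left_integral (hri : ∀ f : H →ₗ[k] k, conv f lam = f 1 • lam)
    (hleft : ∀ x : H, x * Λ = counit (R := k) x • Λ) (x : H) (r : Repr k Λ ι) :
    ∑ i ∈ r.index, lam (x * r.right i) • r.left i = lam Λ • antipode k x := by
  rw [sum_lam_mul_smul_left hri (ℛ k x) r]
  conv_rhs => rw [← sum_smul_counit (ℛ k x)]
  simp [hleft, Finset.smul_sum, smul_smul, mul_comm]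

lemma sum_lam_mul_smul_right_of_right_integral (hmod : ∀ f : H →ₗ[k] k, conv lam f = f 1 • lam)
    (hright : ∀ x : H, Λ * x = counit (R := k) x • Λ) (x : H) (r : Repr k Λ ι) :
    ∑ i ∈ r.index, lam (r.left i * x) • r.right i = lam Λ • antipode k x := by
  rw [sum_lam_mul_smul_right hmod (ℛ k x) r]
  conv_rhs => rw [← sum_counit_smul (ℛ k x)]
  simp [hright, Finset.smul_sum, smul_smul, mul_comm]

lemma lam_left_integral_ne_zero (hlam : lam ≠ 0)
    (hri : ∀ f : H →ₗ[k] k, conv f lam = f 1 • lam) (hΛ : Λ ≠ 0)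
    (hleft : ∀ x : H, x * Λ = counit (R := k) x • Λ) : lam Λ ≠ 0 := fun h =>
  hΛ <| eq_zero_of_forall_sum_lam_mul_smul_eq_zero hlam hri fun r x => by
    rw [sum_lam_mul_smul_left_of_left_integral hri hleft x r, h, zero_smul]

lemma lam_antipode_mul (hri : ∀ f : H →ₗ[k] k, conv f lam = f 1 • lam)
    (hmod : ∀ f : H →ₗ[k] k, conv lam f = f 1 • lam)
    (hleft : ∀ x : H, x * Λ = counit (R := k) x • Λ)
    (hright : ∀ x : H, Λ * x = counit (R := k) x • Λ) (hΛ : lam Λ ≠ 0) (a b : H) :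
    lam (antipode k a * b) = lam (a * antipode k b) := by
  refine mul_left_cancel₀ hΛ ?_
  let r := ℛ k Λ
  calc lam Λ * lam (antipode k a * b)
      = lam ((∑ i ∈ r.index, lam (a * r.right i) • r.left i) * b) := by
        rw [sum_lam_mul_smul_left_of_left_integral hri hleft, smul_mul_assoc, map_smul,
          smul_eq_mul]
    _ = lam (a * ∑ i ∈ r.index, lam (r.left i * b) • r.right i) := by
        simp only [Finset.sum_mul, Finset.mul_sum, smul_mul_assoc, mul_smul_comm, map_sum,
          map_smul, smul_eq_mul, mul_comm]
    _ = lam Λ * lam (a * antipode k b) := by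
        rw [sum_lam_mul_smul_right_of_right_integral hmod hright, mul_smul_comm, map_smul,
          smul_eq_mul]

lemma lam_antipode (hri : ∀ f : H →ₗ[k] k, conv f lam = f 1 • lam)
    (hmod : ∀ f : H →ₗ[k] k, conv lam f = f 1 • lam)
    (hleft : ∀ x : H, x * Λ = counit (R := k) x • Λ)
    (hright : ∀ x : H, Λ * x = counit (R := k) x • Λ) (hΛ : lam Λ ≠ 0) (a : H) :
    lam (antipode k a) = lam a := by
  simpa using lam_antipode_mul hri hmod hleft hright hΛ a 1

end Cointegral

theorem stmt3_general {k H : Type} [Field k] [Ring H] [HopfAlgebra k H]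
    (lam : H →ₗ[k] k) (hlam : lam ≠ 0)
    (hri : ∀ f : H →ₗ[k] k, conv f lam = f 1 • lam)
    (hmod : ∀ f : H →ₗ[k] k, conv lam f = f 1 • lam)
    (Λ : H) (hΛ : Λ ≠ 0)
    (hleft : ∀ x : H, x * Λ = Coalgebra.counit (R := k) x • Λ)
    (hright : ∀ x : H, Λ * x = Coalgebra.counit (R := k) x • Λ)
    (hS4 : ∀ x : H, HopfAlgebra.antipode (R := k) (HopfAlgebra.antipode (R := k)
      (HopfAlgebra.antipode (R := k) (HopfAlgebra.antipode (R := k) x))) = x) :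
    ∀ x y : H,
      lam (x * y) =
        lam (HopfAlgebra.antipode (R := k) (HopfAlgebra.antipode (R := k) y) * x) := by
  have hlamΛ := lam_left_integral_ne_zero hlam hri hΛ hleft
  intro x y
  obtain ⟨a, rfl⟩ : ∃ a, antipode k a = x := ⟨_, hS4 x⟩
  rw [lam_antipode_mul hri hmod hleft hright hlamΛ, ← lam_antipode hri hmod hleft hright hlamΛ,
    antipode_mul_antidistrib]

/-- Let `H` be a finite-dimensional unimodular Hopf algebra with nonzero right integral
`λ ∈ H*`. Then `λ` is a quantum character: `λ(xy) = λ(S²(y)x)` for all `x, y ∈ H`.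
Following the context, unimodularity is encoded by: a nonzero left cointegral `Λ` whose modular
function equals `ε` (i.e. `Λ` is two-sided), the distinguished group-like element of `λ` being
`1` (i.e. `λ · f = f(1) • λ`), and Radford's `S⁴` formula, which under these assumptions reads
`S⁴ = id`. -/
theorem stmt3 {k H : Type} [Field k] [Ring H] [HopfAlgebra k H] [FiniteDimensional k H]
    (lam : H →ₗ[k] k) (hlam : lam ≠ 0)
    (hri : ∀ f : H →ₗ[k] k, conv f lam = f 1 • lam)
    (hmod : ∀ f : H →ₗ[k] k, conv lam f = f 1 • lam)
    (Λ : H) (hΛ : Λ ≠ 0)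
    (hleft : ∀ x : H, x * Λ = Coalgebra.counit (R := k) x • Λ)
    (hright : ∀ x : H, Λ * x = Coalgebra.counit (R := k) x • Λ)
    (hS4 : ∀ x : H, HopfAlgebra.antipode (R := k) (HopfAlgebra.antipode (R := k)
      (HopfAlgebra.antipode (R := k) (HopfAlgebra.antipode (R := k) x))) = x) :
    ∀ x y : H,
      lam (x * y) =
        lam (HopfAlgebra.antipode (R := k) (HopfAlgebra.antipode (R := k) y) * x) :=
  stmt3_general lam hlam hri hmod Λ hΛ hleft hright hS4
end

section
/- Let H be a finite-dimensional unimodular ribbon Hopf algebra with right integral λ. Suppose Σᵢ L_{xᵢ} ⊗ fᵢ : H ⊗ W → H ⊗ W' is an H-module morphism, where L_{xᵢ} denotes left multiplication by xᵢ ∈ H on the regular representation H, and fᵢ : W → W' are linear maps between H-modules. Then the linear map Σᵢ λ(xᵢ)·fᵢ : W → W' is an H-module morphism. -/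
/-!
Write `ψ = S⁻¹`. Coassociativity, with the antipode axiom for `S` and for `ψ` (the antipode of
`Hᶜᵒᵖ`), gives `Σ h₍₂₎ψ(h₍₁₎) ⊗ h₍₃₎ = 1 ⊗ h` and `Σ S(h₍₁₎)h₍₂₎ ⊗ h₍₃₎ = 1 ⊗ h`.
The first identity writes `1 ⊗ h·w` as `Σ h₍₂₎·(ψ(h₍₁₎) ⊗ w)`, and `Σ λ(xᵢ) fᵢ` is
`w ↦ (λ ⊗ id)(T(1 ⊗ w))` for the morphism `T = Σ L_{xᵢ} ⊗ fᵢ`, so `h` can be pushed through `T`.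
After pairing with `λ`, the quantum character property turns `λ(h₍₂₎ x ψ(h₍₁₎))` into
`λ(S(h₍₁₎) h₍₂₎ x)`, and the second identity collapses the sum to `λ(x) h`.
-/

open TensorProduct

open Coalgebra HopfAlgebra

section

variable {R A : Type*} [CommSemiring R] [Semiring A]

theorem sum_sum_tmul_eq_one_tmul_of_apply_comul [Bialgebra R A] (μ : A ⊗[R] A →ₗ[R] A)
    (hμ : ∀ a, μ (comul a) = algebraMap R A (counit a)) (a : A) :
    ∑ n ∈ (ℛ R a).index, ∑ q ∈ (ℛ R n.2).index, μ (n.1 ⊗ₜ q.1) ⊗ₜ[R] q.2 = 1 ⊗ₜ a := by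
  have h := congrArg (fun z => μ.rTensor A ((TensorProduct.assoc R A A A).symm z))
    (sum_tmul_tmul_eq (ℛ R a) (fun n => ℛ R n.1) (fun n => ℛ R n.2))
  simp only [map_sum, assoc_symm_tmul, LinearMap.rTensor_tmul] at h
  refine h.symm.trans ?_
  calc _ = ∑ n ∈ (ℛ R a).index, μ (comul n.1) ⊗ₜ[R] n.2 := by
        simp only [← (ℛ R _).eq, map_sum, sum_tmul]; rfl
    _ = 1 ⊗ₜ a := by
        simp only [hμ, Algebra.algebraMap_eq_smul_one, smul_tmul, ← tmul_sum]
        exact congrArg _ (sum_counit_smul (ℛ R a))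

variable [HopfAlgebra R A] (hS : Function.Bijective (antipode R (A := A)))

noncomputable def antipodeInv : A ≃ₗ[R] A := (LinearEquiv.ofBijective (antipode R) hS).symm

@[simp]
theorem antipode_antipodeInv (a : A) : antipode R (antipodeInv hS a) = a :=
  (LinearEquiv.ofBijective (antipode R) hS).apply_symm_apply a

/-- `S⁻¹` is the antipode of the co-opposite Hopf algebra. -/
theorem mul'_comm_rTensor_antipodeInv_comul_apply (a : A) :
    (LinearMap.mul' R A ∘ₗ (TensorProduct.comm R A A).toLinearMap ∘ₗ
      (antipodeInv hS).toLinearMap.rTensor A) (comul a) = algebraMap R A (counit a) := by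
  have hcomp : antipode R ∘ₗ LinearMap.mul' R A ∘ₗ (TensorProduct.comm R A A).toLinearMap ∘ₗ
      (antipodeInv hS).toLinearMap.rTensor A = LinearMap.mul' R A ∘ₗ (antipode R).lTensor A := by
    ext b c
    simp [antipode_mul_antidistrib]
  apply hS.injective
  rw [← LinearMap.comp_apply (antipode R), hcomp, LinearMap.comp_apply,
    mul_antipode_lTensor_comul_apply, Algebra.algebraMap_eq_smul_one, map_smul, antipode_one]

variable {W : Type*} [AddCommMonoid W] [Module R W]

noncomputable def regularTensorAction (ρ : A →ₐ[R] Module.End R W) (a : A) :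
    A ⊗[R] W →ₗ[R] A ⊗[R] W :=
  ∑ n ∈ (ℛ R a).index, TensorProduct.map (LinearMap.mulLeft R n.1) (ρ n.2)

theorem regularTensorAction_tmul (ρ : A →ₐ[R] Module.End R W) (a b : A) (w : W) :
    regularTensorAction ρ a (b ⊗ₜ w) = ∑ n ∈ (ℛ R a).index, (n.1 * b) ⊗ₜ ρ n.2 w := by
  simp [regularTensorAction]

theorem sum_regularTensorAction_antipodeInv_tmul (ρ : A →ₐ[R] Module.End R W) (a : A) (w : W) :
    ∑ n ∈ (ℛ R a).index, regularTensorAction ρ n.2 (antipodeInv hS n.1 ⊗ₜ w) = 1 ⊗ₜ ρ a w := by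
  have h := congrArg ((ρ.toLinearMap.flip w).lTensor A)
    (sum_sum_tmul_eq_one_tmul_of_apply_comul _ (mul'_comm_rTensor_antipodeInv_comul_apply hS) a)
  simpa [regularTensorAction_tmul] using h

theorem sum_lid_rTensor_regularTensorAction_mul_antipodeInv_tmul (ρ : A →ₐ[R] Module.End R W)
    (lam : A →ₗ[R] R) (hlam : ∀ a b : A, lam (a * b) = lam (antipode R (antipode R b) * a))
    (a y : A) (w : W) :
    ∑ n ∈ (ℛ R a).index, TensorProduct.lid R W
      (lam.rTensor W (regularTensorAction ρ n.2 ((y * antipodeInv hS n.1) ⊗ₜ w))) =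
      lam y • ρ a w := by
  have h := congrArg ((TensorProduct.lid R W).toLinearMap ∘ₗ
      TensorProduct.map (lam ∘ₗ LinearMap.mulRight R y) (ρ.toLinearMap.flip w))
    (sum_sum_tmul_eq_one_tmul_of_apply_comul (LinearMap.mul' R A ∘ₗ (antipode R).rTensor A)
      mul_antipode_rTensor_comul_apply a)
  simp only [map_sum, LinearMap.comp_apply, map_tmul] at h
  simp only [regularTensorAction_tmul, map_sum, LinearMap.rTensor_tmul, lid_tmul]
  -- `λ(q₁ y ψ(n₁)) = λ(S(n₁) q₁ y)` by the quantum character property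
  simpa [← mul_assoc, hlam _ (antipodeInv hS _)] using h

end

theorem stmt5_general {k H W W' : Type} [Field k] [Ring H] [HopfAlgebra k H]
    [AddCommGroup W] [Module k W] [AddCommGroup W'] [Module k W']
    (ρ : H →ₐ[k] Module.End k W) (ρ' : H →ₐ[k] Module.End k W')
    (lam : H →ₗ[k] k)
    (hqc : ∀ a b : H, lam (a * b) =
      lam (HopfAlgebra.antipode (R := k) (HopfAlgebra.antipode (R := k) b) * a))
    (hSbij : Function.Bijective (HopfAlgebra.antipode (R := k) (A := H)))
    (ι : Type) (s : Finset ι) (x : ι → H) (f : ι → (W →ₗ[k] W'))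
    (hmor : ∀ (h : H) (κ : Type) (t : Finset κ) (a b : κ → H),
      Coalgebra.comul (R := k) h = ∑ j ∈ t, a j ⊗ₜ[k] b j →
      (∑ i ∈ s, TensorProduct.map (LinearMap.mulLeft k (x i)) (f i)) ∘ₗ
          (∑ j ∈ t, TensorProduct.map (LinearMap.mulLeft k (a j)) (ρ (b j))) =
        (∑ j ∈ t, TensorProduct.map (LinearMap.mulLeft k (a j)) (ρ' (b j))) ∘ₗ
          (∑ i ∈ s, TensorProduct.map (LinearMap.mulLeft k (x i)) (f i))) :
    ∀ h : H,
      (∑ i ∈ s, lam (x i) • f i) ∘ₗ (ρ h : W →ₗ[k] W)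
        = (ρ' h : W' →ₗ[k] W') ∘ₗ (∑ i ∈ s, lam (x i) • f i) := by
  intro h
  set T := ∑ i ∈ s, TensorProduct.map (LinearMap.mulLeft k (x i)) (f i)
  have hT (a : H) : T ∘ₗ regularTensorAction ρ a = regularTensorAction ρ' a ∘ₗ T :=
    hmor a (H × H) (ℛ k a).index Prod.fst Prod.snd (ℛ k a).eq.symm
  set P := (TensorProduct.lid k W').toLinearMap ∘ₗ lam.rTensor W'
  have hPT (w : W) : (∑ i ∈ s, lam (x i) • f i) w = P (T (1 ⊗ₜ w)) := by
    simp [T, P]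
  ext w
  calc (∑ i ∈ s, lam (x i) • f i) (ρ h w)
      = ∑ n ∈ (ℛ k h).index, P (T (regularTensorAction ρ n.2 (antipodeInv hSbij n.1 ⊗ₜ w))) := by
        rw [hPT, ← sum_regularTensorAction_antipodeInv_tmul hSbij, map_sum, map_sum]
    _ = ∑ n ∈ (ℛ k h).index, P (regularTensorAction ρ' n.2 (T (antipodeInv hSbij n.1 ⊗ₜ w))) := by
        exact Finset.sum_congr rfl fun n _ => congrArg P (LinearMap.congr_fun (hT n.2) _)
    _ = ∑ i ∈ s, lam (x i) • ρ' h (f i w) := by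
        simp only [T, P, LinearMap.sum_apply, map_tmul, LinearMap.mulLeft_apply, map_sum,
          LinearMap.comp_apply, LinearEquiv.coe_coe]
        rw [Finset.sum_comm]
        exact Finset.sum_congr rfl fun i _ =>
          sum_lid_rTensor_regularTensorAction_mul_antipodeInv_tmul hSbij ρ' lam hqc h (x i) (f i w)
    _ = ρ' h ((∑ i ∈ s, lam (x i) • f i) w) := by simp

/-- Let `H` be a finite-dimensional unimodular ribbon Hopf algebra with right integral `λ`
(satisfying the quantum character property). Suppose `Σᵢ L_{xᵢ} ⊗ fᵢ : H ⊗ W → H ⊗ W'` is an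
`H`-module morphism, where `L_{xᵢ}` is left multiplication by `xᵢ` on the regular representation,
`fᵢ : W → W'` are linear maps between `H`-modules (given by representations `ρ`, `ρ'`), and
`H ⊗ W` carries the action `h · (c ⊗ w) = h₍₁₎ c ⊗ h₍₂₎ w` (expressed via Sweedler
representations of `Δ(h)`). Then `Σᵢ λ(xᵢ) • fᵢ : W → W'` is an `H`-module morphism. -/
theorem stmt5 {k H W W' : Type} [Field k] [Ring H] [HopfAlgebra k H] [FiniteDimensional k H]
    [AddCommGroup W] [Module k W] [AddCommGroup W'] [Module k W']
    (ρ : H →ₐ[k] Module.End k W) (ρ' : H →ₐ[k] Module.End k W')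
    (lam : H →ₗ[k] k)
    (hri : ∀ f : H →ₗ[k] k, conv f lam = f 1 • lam)
    (hqc : ∀ a b : H, lam (a * b) =
      lam (HopfAlgebra.antipode (R := k) (HopfAlgebra.antipode (R := k) b) * a))
    (hSbij : Function.Bijective (HopfAlgebra.antipode (R := k) (A := H)))
    (ι : Type) (s : Finset ι) (x : ι → H) (f : ι → (W →ₗ[k] W'))
    (hmor : ∀ (h : H) (κ : Type) (t : Finset κ) (a b : κ → H),
      Coalgebra.comul (R := k) h = ∑ j ∈ t, a j ⊗ₜ[k] b j →
      (∑ i ∈ s, TensorProduct.map (LinearMap.mulLeft k (x i)) (f i)) ∘ₗ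
          (∑ j ∈ t, TensorProduct.map (LinearMap.mulLeft k (a j)) (ρ (b j))) =
        (∑ j ∈ t, TensorProduct.map (LinearMap.mulLeft k (a j)) (ρ' (b j))) ∘ₗ
          (∑ i ∈ s, TensorProduct.map (LinearMap.mulLeft k (x i)) (f i))) :
    ∀ h : H,
      (∑ i ∈ s, lam (x i) • f i) ∘ₗ (ρ h : W →ₗ[k] W)
        = (ρ' h : W' →ₗ[k] W') ∘ₗ (∑ i ∈ s, lam (x i) • f i) :=
  stmt5_general ρ ρ' lam hqc hSbij ι s x f hmor
end

section
/- Let H be a finite-dimensional Hopf algebra with right integral λ. Then for all x, y ∈ H: λ(S(y_{(1)}) x y_{(2)}) = λ(x)·ε(y). -/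
open TensorProduct

namespace HopfAlgebra

open Coalgebra

variable {R A : Type*} [CommSemiring R] [Semiring A] [HopfAlgebra R A]

/-- Since `S` is an antihomomorphism, the sum is `S(y₍₁₎ S(y₍₂₎)) = S(ε(y) 1)`. -/
lemma sum_antipode_antipode_mul_antipode_eq_smul {y : A} {ι : Type*} (repr : Repr R y ι) :
    ∑ i ∈ repr.index, antipode R (antipode R (repr.right i)) * antipode R (repr.left i) =
      counit (R := R) y • 1 := by
  simp_rw [← antipode_mul_antidistrib, ← map_sum, sum_mul_antipode_eq_smul repr, map_smul,
    antipode_one]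

lemma sum_apply_antipode_mul_mul_eq_counit_smul {M : Type*} [AddCommMonoid M] [Module R M]
    (lam : A →ₗ[R] M) (hqc : ∀ a b : A, lam (a * b) = lam (antipode R (antipode R b) * a))
    (x : A) {y : A} {ι : Type*} (repr : Repr R y ι) :
    ∑ i ∈ repr.index, lam (antipode R (repr.left i) * x * repr.right i) =
      counit (R := R) y • lam x :=
  calc ∑ i ∈ repr.index, lam (antipode R (repr.left i) * x * repr.right i)
      = lam ((∑ i ∈ repr.index,
          antipode R (antipode R (repr.right i)) * antipode R (repr.left i)) * x) := by
        rw [Finset.sum_mul, map_sum]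
        refine Finset.sum_congr rfl fun i _ => ?_
        rw [hqc, mul_assoc]
    _ = counit (R := R) y • lam x := by
        rw [sum_antipode_antipode_mul_antipode_eq_smul, smul_mul_assoc, one_mul, map_smul]

end HopfAlgebra

theorem stmt6_general {k H : Type} [Field k] [Ring H] [HopfAlgebra k H]
    (lam : H →ₗ[k] k)
    (hqc : ∀ a b : H, lam (a * b) =
      lam (HopfAlgebra.antipode (R := k) (HopfAlgebra.antipode (R := k) b) * a)) :
    ∀ x y : H,
      lam ((LinearMap.mul' k H)
        ((TensorProduct.map
            ((LinearMap.mulRight k x) ∘ₗ HopfAlgebra.antipode (R := k))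
            LinearMap.id)
          (Coalgebra.comul (R := k) y)))
        = lam x * Coalgebra.counit (R := k) y := by
  intro x y
  have repr := Coalgebra.Repr.arbitrary k y
  rw [← repr.eq, mul_comm, ← smul_eq_mul,
    ← HopfAlgebra.sum_apply_antipode_mul_mul_eq_counit_smul lam hqc x repr]
  simp [map_sum]

/-- Let `H` be a finite-dimensional (unimodular) Hopf algebra with right integral `λ`
satisfying the quantum character property. Then for all `x, y ∈ H`:
`λ(S(y₍₁₎) x y₍₂₎) = λ(x) ε(y)`. The left-hand side is expressed as `λ` applied to
`mul' ∘ ((·x) ∘ S ⊗ id) ∘ Δ` evaluated at `y`. -/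
theorem stmt6 {k H : Type} [Field k] [Ring H] [HopfAlgebra k H] [FiniteDimensional k H]
    (lam : H →ₗ[k] k)
    (hri : ∀ f : H →ₗ[k] k, conv f lam = f 1 • lam)
    (hqc : ∀ a b : H, lam (a * b) =
      lam (HopfAlgebra.antipode (R := k) (HopfAlgebra.antipode (R := k) b) * a)) :
    ∀ x y : H,
      lam ((LinearMap.mul' k H)
        ((TensorProduct.map
            ((LinearMap.mulRight k x) ∘ₗ HopfAlgebra.antipode (R := k))
            LinearMap.id)
          (Coalgebra.comul (R := k) y)))
        = lam x * Coalgebra.counit (R := k) y :=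
  stmt6_general lam hqc
end

section
/- Let H be a finite-dimensional ribbon Hopf algebra and let X be the dual coadjoint representation: the vector space H with action ρ_X(h)(x) = h_{(2)} x S⁻¹(h_{(1)}). Then the 'Radford map for X' φ_X : X → X*, defined by φ_X(x)(y) = λ(S²(x)y), is a morphism of H-modules, where λ is a right integral satisfying the quantum character property and X* carries the dual module structure ρ_{X*}(h)(f) = f ∘ ρ_X(S(h)). -/
open TensorProduct

/-- Let `H` be a finite-dimensional unimodular ribbon Hopf algebra with bijective antipode
(`Sinv` is the inverse) and right integral `λ` satisfying the quantum character property
`λ(xy) = λ(S²(y)x)`. Let `X` be the dual coadjoint representation: `H` with action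
`ρ_X(h)(x) = h₍₂₎ x S⁻¹(h₍₁₎)`. Then the Radford map for `X`, `φ_X(x)(y) = λ(S²(x)y)`, is a
morphism of `H`-modules `X → X*`, where `X*` carries the dual action
`ρ_{X*}(h)(f) = f ∘ ρ_X(S(h))`. Concretely, for every `h, x, y ∈ H` and every Sweedler
representation `Δ(h) = Σⱼ aⱼ ⊗ bⱼ`:
`Σⱼ λ(S²(bⱼ x S⁻¹(aⱼ)) y) = Σⱼ λ(S²(x) (S(aⱼ) y bⱼ))`. -/
theorem stmt8 {k H : Type} [Field k] [Ring H] [HopfAlgebra k H] [FiniteDimensional k H]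
    (lam : H →ₗ[k] k)
    (hqc : ∀ a b : H, lam (a * b) =
      lam (HopfAlgebra.antipode (R := k) (HopfAlgebra.antipode (R := k) b) * a))
    (Sinv : H →ₗ[k] H)
    (hS1 : ∀ x : H, Sinv (HopfAlgebra.antipode (R := k) x) = x)
    (hS2 : ∀ x : H, HopfAlgebra.antipode (R := k) (Sinv x) = x) :
    ∀ (h x y : H) (ι : Type) (t : Finset ι) (a b : ι → H),
      Coalgebra.comul (R := k) h = ∑ j ∈ t, a j ⊗ₜ[k] b j →
      ∑ j ∈ t, lam (HopfAlgebra.antipode (R := k)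
          (HopfAlgebra.antipode (R := k) (b j * x * Sinv (a j))) * y)
        = ∑ j ∈ t, lam (HopfAlgebra.antipode (R := k) (HopfAlgebra.antipode (R := k) x) *
            (HopfAlgebra.antipode (R := k) (a j) * y * b j)) := by
  intro h x y ι t a b _
  refine Finset.sum_congr rfl fun j _ => ?_
  set S : H →ₗ[k] H := HopfAlgebra.antipode (R := k) with hS
  calc lam (S (S (b j * x * Sinv (a j))) * y)
      = lam (y * (b j * x * Sinv (a j))) := (hqc _ _).symm
    _ = lam ((y * b j * x) * Sinv (a j)) := by rw [mul_assoc, mul_assoc, mul_assoc]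
    _ = lam (S (S (Sinv (a j))) * (y * b j * x)) := hqc _ _
    _ = lam ((S (a j) * y * b j) * x) := by
          rw [hS2]; congr 1; simp only [mul_assoc]
    _ = lam (S (S x) * (S (a j) * y * b j)) := hqc _ _
end

section
/- Let H be a finite-dimensional quasitriangular Hopf algebra with R-matrix R = Σᵢ aᵢ ⊗ bᵢ and let X be the dual coadjoint representation. Then the map ψ_X := S⁻¹ ∘ ψ : X* → X, where ψ(f) = Σ_{i,j} f(b_j a_i)·a_j b_i is the Drinfeld map, is a morphism of H-modules. -/
/-!
With `Q = R₂₁R`, the Drinfeld map is the slice `ψ(f) = (f ⊗ id)(Q)`, and quasi-cocommutativity of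
`R` makes `Q` commute with `Δ(H)`. In the convolution algebra of linear maps `H → H ⊗ H`,
`Δ = ι₁ ⋆ ι₂` for `ι₁ x = x ⊗ 1`, `ι₂ x = 1 ⊗ x`, whose convolution inverses are `ι₁ ∘ S` and
`ι₂ ∘ S`, and `Q` becomes the constant map `Q ε`, which commutes with `Δ`. Hence
`(ι₁ ∘ S) ⋆ Q ⋆ ι₁ = (ι₁ ∘ S) ⋆ Q ⋆ Δ ⋆ (ι₂ ∘ S) = (ι₁ ∘ S) ⋆ Δ ⋆ Q ⋆ (ι₂ ∘ S)
  = ι₂ ⋆ Q ⋆ (ι₂ ∘ S)`,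
that is `Σ (S h₁ ⊗ 1) Q (h₂ ⊗ 1) = Σ (1 ⊗ h₁) Q (1 ⊗ S h₂)`. Slicing with `f ⊗ id` gives
`ψ(ρ_{X*}(h) f) = Σ h₁ ψ(f) S(h₂)`, and applying the anti-multiplicative `S⁻¹` gives the claim.
-/

open TensorProduct

/-- The `R`-matrix as an element of `H ⊗ H`, given by a finite family. -/
noncomputable def Rmat {k H : Type} [Field k] [Ring H] [HopfAlgebra k H]
    {ι : Type} (s : Finset ι) (a b : ι → H) : H ⊗[k] H :=
  ∑ i ∈ s, a i ⊗ₜ[k] b i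

/-- The Drinfeld map `ψ(f) = Σ_{i,j} f(bⱼ aᵢ) • aⱼ bᵢ` associated with the
`R`-matrix `R = Σᵢ aᵢ ⊗ bᵢ`. -/
noncomputable def drinfeld {k H : Type} [Field k] [Ring H] [HopfAlgebra k H]
    {ι : Type} (s : Finset ι) (a b : ι → H) (f : H →ₗ[k] k) : H :=
  ∑ i ∈ s, ∑ j ∈ s, f (b j * a i) • (a j * b i)

open Coalgebra HopfAlgebra WithConv

theorem Coalgebra.sum_counit_smul_left {R A ι : Type*} [CommSemiring R] [AddCommMonoid A]
    [Module R A] [Coalgebra R A] {a : A} (𝓡 : Repr R a ι) :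
    ∑ i ∈ 𝓡.index, counit (R := R) (𝓡.right i) • 𝓡.left i = a := by
  simpa only [map_sum, _root_.TensorProduct.rid_tmul, one_smul] using
    congrArg (_root_.TensorProduct.rid R A) (sum_tmul_counit_eq 𝓡)

theorem HopfAlgebra.antipode_inv_mul_antidistrib {k H : Type*} [CommSemiring k] [Semiring H]
    [HopfAlgebra k H] {Sinv : H →ₗ[k] H} (hS1 : ∀ x, Sinv (antipode k x) = x)
    (hS2 : ∀ x, antipode k (Sinv x) = x) (u v : H) : Sinv (u * v) = Sinv v * Sinv u := by
  rw [← hS1 (Sinv v * Sinv u), antipode_mul_antidistrib, hS2, hS2]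

namespace LinearMap

variable {k H B : Type*} [CommSemiring k] [Semiring H] [HopfAlgebra k H] [Semiring B]
  [Algebra k B]

theorem algHom_comp_antipode_convMul (φ : H →ₐ[k] B) :
    toConv (φ.toLinearMap ∘ₗ antipode k) * toConv φ.toLinearMap = 1 := by
  apply WithConv.ofConv_injective
  have := algHom_comp_convMul_distrib φ (toConv (antipode k)) (toConv id)
  simp only [comp_id] at this
  rw [← this, antipode_mul_id]
  ext; simp

theorem algHom_convMul_comp_antipode (φ : H →ₐ[k] B) :
    toConv φ.toLinearMap * toConv (φ.toLinearMap ∘ₗ antipode k) = 1 := by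
  apply WithConv.ofConv_injective
  have := algHom_comp_convMul_distrib φ (toConv id) (toConv (antipode k))
  simp only [comp_id] at this
  rw [← this, id_mul_antipode]
  ext; simp

theorem convMul_toSpanSingleton_comp_counit (f : WithConv (H →ₗ[k] B)) (q : B) :
    f * toConv (toSpanSingleton k B q ∘ₗ counit) = toConv (mulRight k q ∘ₗ f.ofConv) := by
  ext c
  rw [(ℛ k c).convMul_apply]
  simp only [coe_comp, Function.comp_apply, toSpanSingleton_apply, mul_smul_comm, mulRight_apply,
    ← smul_mul_assoc, ← Finset.sum_mul, ← map_smul, ← map_sum, sum_counit_smul_left]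

theorem toSpanSingleton_comp_counit_convMul (f : WithConv (H →ₗ[k] B)) (q : B) :
    toConv (toSpanSingleton k B q ∘ₗ counit) * f = toConv (mulLeft k q ∘ₗ f.ofConv) := by
  ext c
  rw [(ℛ k c).convMul_apply]
  simp only [coe_comp, Function.comp_apply, toSpanSingleton_apply, smul_mul_assoc, mulLeft_apply,
    ← mul_smul_comm, ← Finset.mul_sum, ← map_smul, ← map_sum, sum_counit_smul]

end LinearMap

section TensorSquare

open LinearMap Algebra.TensorProduct

variable {k H : Type*} [CommSemiring k] [Semiring H]

theorem commute_comm_mul_comul [Bialgebra k H] {R : H ⊗[k] H}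
    (hR : ∀ g : H, TensorProduct.comm k H H (comul (R := k) g) * R = R * comul (R := k) g)
    (g : H) : Commute (TensorProduct.comm k H H R * R) (comul (R := k) g) := by
  let σ := Algebra.TensorProduct.comm k H H
  change ∀ g, σ (comul g) * R = R * comul g at hR
  have hσR : comul (R := k) g * σ R = σ R * σ (comul (R := k) g) := by
    have := congrArg σ (hR g)
    rwa [map_mul, map_mul, show σ (σ (comul g)) = comul g from σ.symm_apply_apply _] at this
  change σ R * R * _ = _ * (σ R * R)
  rw [mul_assoc, ← hR g, ← mul_assoc, ← hσR, mul_assoc]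

theorem HopfAlgebra.sum_antipode_tmul_one_mul_mul_tmul_one [HopfAlgebra k H] {Q : H ⊗[k] H}
    (hQ : ∀ g : H, Commute Q (comul (R := k) g)) {h : H} {κ : Type*} (𝓡 : Repr k h κ) :
    ∑ j ∈ 𝓡.index, (antipode k (𝓡.left j) ⊗ₜ[k] 1) * Q * (𝓡.right j ⊗ₜ[k] 1) =
      ∑ j ∈ 𝓡.index, (1 ⊗ₜ[k] 𝓡.left j) * Q * (1 ⊗ₜ[k] antipode k (𝓡.right j)) := by
  let ι₁ : H →ₐ[k] H ⊗[k] H := includeLeft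
  let ι₂ : H →ₐ[k] H ⊗[k] H := includeRight
  let e₁ := toConv ι₁.toLinearMap
  let e₂ := toConv ι₂.toLinearMap
  let s₁ := toConv (ι₁.toLinearMap ∘ₗ antipode k)
  let s₂ := toConv (ι₂.toLinearMap ∘ₗ antipode k)
  let K := toConv (toSpanSingleton k (H ⊗[k] H) Q ∘ₗ counit (R := k) (A := H))
  let Δ := toConv (comul (R := k) (A := H))
  have hs₁ : s₁ * e₁ = 1 := algHom_comp_antipode_convMul ι₁
  have hs₂ : e₂ * s₂ = 1 := algHom_convMul_comp_antipode ι₂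
  have hΔ : Δ = e₁ * e₂ := by
    ext g
    rw [(ℛ k g).convMul_apply, ← (ℛ k g).eq]
    simp [e₁, e₂, ι₁, ι₂]
  have hK : K * Δ = Δ * K := by
    rw [toSpanSingleton_comp_counit_convMul, convMul_toSpanSingleton_comp_counit]
    ext g
    exact hQ g
  have key : s₁ * K * e₁ = e₂ * (K * s₂) :=
    calc s₁ * K * e₁ = s₁ * K * (e₁ * (e₂ * s₂)) := by rw [hs₂, mul_one]
      _ = s₁ * (K * Δ) * s₂ := by rw [hΔ]; simp only [mul_assoc]
      _ = s₁ * e₁ * (e₂ * (K * s₂)) := by rw [hK, hΔ]; simp only [mul_assoc]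
      _ = e₂ * (K * s₂) := by rw [hs₁, one_mul]
  have := congr($key h)
  rw [convMul_toSpanSingleton_comp_counit, toSpanSingleton_comp_counit_convMul,
    𝓡.convMul_apply, 𝓡.convMul_apply] at this
  simpa [s₁, s₂, e₁, e₂, ι₁, ι₂, mul_assoc] using this

variable [Algebra k H]

theorem lid_rTensor_tmul_one_mul_mul_tmul_one (f : H →ₗ[k] k) (x y : H) (w : H ⊗[k] H) :
    TensorProduct.lid k H (f.rTensor H ((x ⊗ₜ[k] 1) * w * (y ⊗ₜ[k] 1))) =
      TensorProduct.lid k H ((f ∘ₗ mulRight k y ∘ₗ mulLeft k x).rTensor H w) := by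
  induction w using TensorProduct.induction_on with
  | zero => simp
  | tmul u v => simp [tmul_mul_tmul, mul_assoc]
  | add u v hu hv => simp only [mul_add, add_mul, map_add, hu, hv]

theorem lid_rTensor_one_tmul_mul_mul_one_tmul (f : H →ₗ[k] k) (x y : H) (w : H ⊗[k] H) :
    TensorProduct.lid k H (f.rTensor H ((1 ⊗ₜ[k] x) * w * (1 ⊗ₜ[k] y))) =
      x * TensorProduct.lid k H (f.rTensor H w) * y := by
  induction w using TensorProduct.induction_on with
  | zero => simp
  | tmul u v => simp [tmul_mul_tmul, mul_assoc]
  | add u v hu hv => simp only [mul_add, add_mul, map_add, hu, hv]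

end TensorSquare

section Drinfeld

variable {k H : Type} [Field k] [Ring H] [HopfAlgebra k H] {ι : Type} (s : Finset ι)
  (a b : ι → H)

theorem drinfeld_eq_lid_rTensor (f : H →ₗ[k] k) :
    drinfeld s a b f = TensorProduct.lid k H
      (f.rTensor H (TensorProduct.comm k H H (Rmat s a b) * Rmat s a b)) := by
  simp only [drinfeld, Rmat, map_sum, comm_tmul, Finset.sum_mul_sum,
    Algebra.TensorProduct.tmul_mul_tmul, LinearMap.rTensor_tmul, lid_tmul]
  exact Finset.sum_comm

theorem drinfeld_sum {κ : Type*} (t : Finset κ) (f : κ → H →ₗ[k] k) :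
    drinfeld s a b (∑ j ∈ t, f j) = ∑ j ∈ t, drinfeld s a b (f j) := by
  simp only [drinfeld, LinearMap.sum_apply, Finset.sum_smul]
  exact (Finset.sum_comm.trans (Finset.sum_congr rfl fun _ _ => Finset.sum_comm)).symm

theorem drinfeld_sum_comp_mul_antipode_eq_sum_mul_mul_antipode
    (hflip : ∀ g : H, TensorProduct.comm k H H (comul (R := k) g) * Rmat s a b =
      Rmat s a b * comul (R := k) g)
    {h : H} {κ : Type} (𝓡 : Repr k h κ) (f : H →ₗ[k] k) :
    drinfeld s a b (∑ j ∈ 𝓡.index,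
        f ∘ₗ LinearMap.mulRight k (𝓡.right j) ∘ₗ LinearMap.mulLeft k (antipode k (𝓡.left j))) =
      ∑ j ∈ 𝓡.index, 𝓡.left j * drinfeld s a b f * antipode k (𝓡.right j) := by
  simp_rw [drinfeld_sum, drinfeld_eq_lid_rTensor, ← lid_rTensor_tmul_one_mul_mul_tmul_one,
    ← lid_rTensor_one_tmul_mul_mul_one_tmul]
  rw [← map_sum, ← map_sum, ← map_sum, ← map_sum,
    sum_antipode_tmul_one_mul_mul_tmul_one (commute_comm_mul_comul hflip)]

end Drinfeld

theorem stmt9_general {k H : Type} [Field k] [Ring H] [HopfAlgebra k H]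
    (Sinv : H →ₗ[k] H)
    (hS1 : ∀ x : H, Sinv (HopfAlgebra.antipode (R := k) x) = x)
    (hS2 : ∀ x : H, HopfAlgebra.antipode (R := k) (Sinv x) = x)
    {ι : Type} (s : Finset ι) (a b : ι → H)
    (hflip : ∀ h : H,
      ((TensorProduct.comm k H H) (Coalgebra.comul (R := k) h)) * Rmat s a b
        = Rmat s a b * Coalgebra.comul (R := k) h) :
    ∀ (h : H) (κ : Type) (t : Finset κ) (c d : κ → H),
      Coalgebra.comul (R := k) h = ∑ j ∈ t, c j ⊗ₜ[k] d j →
      ∀ f : H →ₗ[k] k,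
        Sinv (drinfeld s a b (∑ j ∈ t, f ∘ₗ
            ((LinearMap.mulRight k (d j)) ∘ₗ
              (LinearMap.mulLeft k (HopfAlgebra.antipode (R := k) (c j))))))
          = ∑ j ∈ t, d j * Sinv (drinfeld s a b f) * Sinv (c j) := by
  intro h κ t c d hcd f
  rw [drinfeld_sum_comp_mul_antipode_eq_sum_mul_mul_antipode s a b hflip ⟨t, c, d, hcd.symm⟩,
    map_sum]
  refine Finset.sum_congr rfl fun j _ => ?_
  simp only [antipode_inv_mul_antidistrib hS1 hS2, hS1, mul_assoc]

/-- Let `H` be a finite-dimensional quasitriangular Hopf algebra with `R`-matrix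
`R = Σᵢ aᵢ ⊗ bᵢ` (satisfying `Δᵒᵖ(h) R = R Δ(h)`, `(Δ⊗id)(R) = R₁₃R₂₃`,
`(id⊗Δ)(R) = R₁₃R₁₂`), bijective antipode `S` with inverse `Sinv`, and let `X` be the dual
coadjoint representation `ρ_X(h)(x) = h₍₂₎ x S⁻¹(h₍₁₎)`. Then `ψ_X = S⁻¹ ∘ ψ : X* → X` is a
morphism of `H`-modules: for every `h`, every Sweedler representation `Δ(h) = Σⱼ cⱼ ⊗ dⱼ`,
and every `f ∈ H*`, `ψ_X(ρ_{X*}(h)(f)) = Σⱼ dⱼ ψ_X(f) S⁻¹(cⱼ)` where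
`ρ_{X*}(h)(f) = Σⱼ f(S(cⱼ) · ‒ · dⱼ)`. -/
theorem stmt9 {k H : Type} [Field k] [Ring H] [HopfAlgebra k H] [FiniteDimensional k H]
    (Sinv : H →ₗ[k] H)
    (hS1 : ∀ x : H, Sinv (HopfAlgebra.antipode (R := k) x) = x)
    (hS2 : ∀ x : H, HopfAlgebra.antipode (R := k) (Sinv x) = x)
    {ι : Type} (s : Finset ι) (a b : ι → H)
    (hflip : ∀ h : H,
      ((TensorProduct.comm k H H) (Coalgebra.comul (R := k) h)) * Rmat s a b
        = Rmat s a b * Coalgebra.comul (R := k) h)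
    (hhex1 :
      (TensorProduct.map (Coalgebra.comul (R := k) (A := H)) LinearMap.id) (Rmat s a b)
        = (TensorProduct.map (Algebra.TensorProduct.includeLeft :
              H →ₐ[k] H ⊗[k] H).toLinearMap LinearMap.id (Rmat s a b)) *
          (TensorProduct.map (Algebra.TensorProduct.includeRight :
              H →ₐ[k] H ⊗[k] H).toLinearMap LinearMap.id (Rmat s a b)))
    (hhex2 :
      (TensorProduct.map LinearMap.id (Coalgebra.comul (R := k) (A := H))) (Rmat s a b)
        = (TensorProduct.map LinearMap.id (Algebra.TensorProduct.includeRight :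
              H →ₐ[k] H ⊗[k] H).toLinearMap (Rmat s a b)) *
          (TensorProduct.map LinearMap.id (Algebra.TensorProduct.includeLeft :
              H →ₐ[k] H ⊗[k] H).toLinearMap (Rmat s a b))) :
    ∀ (h : H) (κ : Type) (t : Finset κ) (c d : κ → H),
      Coalgebra.comul (R := k) h = ∑ j ∈ t, c j ⊗ₜ[k] d j →
      ∀ f : H →ₗ[k] k,
        Sinv (drinfeld s a b (∑ j ∈ t, f ∘ₗ
            ((LinearMap.mulRight k (d j)) ∘ₗ
              (LinearMap.mulLeft k (HopfAlgebra.antipode (R := k) (c j))))))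
          = ∑ j ∈ t, d j * Sinv (drinfeld s a b f) * Sinv (c j) :=
  stmt9_general Sinv hS1 hS2 s a b hflip
end

section
/- Let H be a finite-dimensional unimodular ribbon Hopf algebra with right integral λ and R-matrix R = Σᵢ aᵢ ⊗ bᵢ satisfying (S⊗S)(R) = R. Then for all f ∈ H* and x ∈ H: Σ_{i,j} f(b_j a_i)·λ(S(a_j b_i)x) = f( Σ_{i,j} λ(S²(x) b_j a_i) · S⁻¹(a_j b_i) ). Equivalently, with φ_X(x) = λ(S²(x)·–) and ψ_X = S⁻¹∘ψ, one has (ψ_X ∘ φ_X)* = φ_X ∘ ψ_X as maps X* → X*. -/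
open TensorProduct

/-!
Write `S` for the antipode. Since `λ(S(aⱼbᵢ)x) = λ(S²(x) S(bᵢ) S(aⱼ))` and
`f(bⱼaᵢ) = f(S⁻¹(S(aᵢ) S(bⱼ)))`, for fixed `i` each summand on the left has the form
`p(S(aⱼ)) q(S(bⱼ))` with `p, q ∈ H*`, and likewise for fixed `j`. The identity `(S ⊗ S)(R) = R`
therefore lets us drop the antipodes from both pairs in turn, which yields the right-hand side
after exchanging `i` and `j`.
-/

theorem TensorProduct.sum_mul_eq_of_sum_tmul_eq {R M N ι : Type*} [CommSemiring R]
    [AddCommMonoid M] [AddCommMonoid N] [Module R M] [Module R N] (s : Finset ι)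
    {a a' : ι → M} {b b' : ι → N} (h : ∑ i ∈ s, a' i ⊗ₜ[R] b' i = ∑ i ∈ s, a i ⊗ₜ[R] b i)
    (p : M →ₗ[R] R) (q : N →ₗ[R] R) :
    ∑ i ∈ s, p (a' i) * q (b' i) = ∑ i ∈ s, p (a i) * q (b i) := by
  simpa [map_sum] using congr(LinearMap.mul' R R (TensorProduct.map p q $h))

theorem stmt10_general {k H : Type} [Field k] [Ring H] [HopfAlgebra k H]
    (lam : H →ₗ[k] k)
    (hqc : ∀ a b : H, lam (a * b) =
      lam (HopfAlgebra.antipode (R := k) (HopfAlgebra.antipode (R := k) b) * a))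
    (Sinv : H →ₗ[k] H)
    (hS1 : ∀ x : H, Sinv (HopfAlgebra.antipode (R := k) x) = x)
    {ι : Type} (s : Finset ι) (a b : ι → H)
    (hSS : ∑ i ∈ s, (HopfAlgebra.antipode (R := k) (a i)) ⊗ₜ[k]
        (HopfAlgebra.antipode (R := k) (b i)) = ∑ i ∈ s, a i ⊗ₜ[k] b i) :
    ∀ (f : H →ₗ[k] k) (x : H),
      ∑ i ∈ s, ∑ j ∈ s, f (b j * a i) * lam (HopfAlgebra.antipode (R := k) (a j * b i) * x)
        = f (∑ i ∈ s, ∑ j ∈ s,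
            lam (HopfAlgebra.antipode (R := k) (HopfAlgebra.antipode (R := k) x) *
              (b j * a i)) • Sinv (a j * b i)) := by
  intro f x
  set S : H →ₗ[k] H := HopfAlgebra.antipode k
  set y := S (S x)
  simp only [map_sum, map_smul, smul_eq_mul]
  calc ∑ i ∈ s, ∑ j ∈ s, f (b j * a i) * lam (S (a j * b i) * x)
      = ∑ i ∈ s, ∑ j ∈ s, lam (y * (S (b i) * S (a j))) * f (Sinv (S (a i) * S (b j))) := by
        refine Finset.sum_congr rfl fun i _ => Finset.sum_congr rfl fun j _ => ?_
        rw [hqc (S _) x, ← hS1 (b j * a i), HopfAlgebra.antipode_mul_antidistrib,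
          HopfAlgebra.antipode_mul_antidistrib, mul_comm]
    _ = ∑ i ∈ s, ∑ j ∈ s, lam (y * (S (b i) * a j)) * f (Sinv (S (a i) * b j)) :=
        Finset.sum_congr rfl fun i _ => sum_mul_eq_of_sum_tmul_eq s hSS
          (lam ∘ₗ .mulLeft k y ∘ₗ .mulLeft k (S (b i))) (f ∘ₗ Sinv ∘ₗ .mulLeft k (S (a i)))
    _ = ∑ j ∈ s, ∑ i ∈ s, f (Sinv (a i * b j)) * lam (y * (b i * a j)) := by
        rw [Finset.sum_comm]
        refine Finset.sum_congr rfl fun j _ => ?_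
        simp_rw [mul_comm (lam _)]
        exact sum_mul_eq_of_sum_tmul_eq s hSS
          (f ∘ₗ Sinv ∘ₗ .mulRight k (b j)) (lam ∘ₗ .mulLeft k y ∘ₗ .mulRight k (a j))
    _ = ∑ i ∈ s, ∑ j ∈ s, lam (y * (b j * a i)) * f (Sinv (a j * b i)) :=
        Finset.sum_congr rfl fun _ _ => Finset.sum_congr rfl fun _ _ => mul_comm _ _

/-- Let `H` be a finite-dimensional unimodular ribbon Hopf algebra with right integral `λ`
(quantum character: `λ(xy) = λ(S²(y)x)`), bijective antipode with inverse `Sinv`, and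
`R`-matrix `R = Σᵢ aᵢ ⊗ bᵢ` satisfying `(S⊗S)(R) = R`. Then for all `f ∈ H*` and `x ∈ H`:
`Σ_{i,j} f(bⱼ aᵢ) λ(S(aⱼ bᵢ) x) = f( Σ_{i,j} λ(S²(x) bⱼ aᵢ) • S⁻¹(aⱼ bᵢ) )`,
i.e. `(ψ_X ∘ φ_X)* = φ_X ∘ ψ_X`. -/
theorem stmt10 {k H : Type} [Field k] [Ring H] [HopfAlgebra k H] [FiniteDimensional k H]
    (lam : H →ₗ[k] k)
    (hqc : ∀ a b : H, lam (a * b) =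
      lam (HopfAlgebra.antipode (R := k) (HopfAlgebra.antipode (R := k) b) * a))
    (Sinv : H →ₗ[k] H)
    (hS1 : ∀ x : H, Sinv (HopfAlgebra.antipode (R := k) x) = x)
    (hS2 : ∀ x : H, HopfAlgebra.antipode (R := k) (Sinv x) = x)
    {ι : Type} (s : Finset ι) (a b : ι → H)
    (hSS : ∑ i ∈ s, (HopfAlgebra.antipode (R := k) (a i)) ⊗ₜ[k]
        (HopfAlgebra.antipode (R := k) (b i)) = ∑ i ∈ s, a i ⊗ₜ[k] b i) :
    ∀ (f : H →ₗ[k] k) (x : H),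
      ∑ i ∈ s, ∑ j ∈ s, f (b j * a i) * lam (HopfAlgebra.antipode (R := k) (a j * b i) * x)
        = f (∑ i ∈ s, ∑ j ∈ s,
            lam (HopfAlgebra.antipode (R := k) (HopfAlgebra.antipode (R := k) x) *
              (b j * a i)) • Sinv (a j * b i)) :=
  stmt10_general lam hqc Sinv hS1 s a b hSS
end

section
/- Let H be a finite-dimensional factorizable ribbon Hopf algebra with ribbon element v, right integral λ, and left cointegral Λ with λ(Λ) = 1. Define Δ₊ = λ(v⁻¹), Δ₋ = λ(v), and let ζ ∈ k be the scalar with ψ(λ) = ζΛ (where ψ is the Drinfeld map). Then Δ₋·Δ₊ = ζ ≠ 0; in particular H is non-degenerate. -/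
open TensorProduct

/-- Let `H` be a finite-dimensional factorizable ribbon Hopf algebra with `R`-matrix
`R = Σᵢ aᵢ ⊗ bᵢ` (quasitriangularity axioms), ribbon element `v` (central, invertible,
`S(v) = v`, `ε(v) = 1`, `Δ(v) (R₂₁R) = v ⊗ v`), right integral `λ` and left cointegral `Λ`
with `λ(Λ) = 1`. Define `Δ₊ = λ(v⁻¹)`, `Δ₋ = λ(v)` and let `ζ` be the scalar with
`ψ(λ) = ζ • Λ`. Then `Δ₋ Δ₊ = ζ ≠ 0`; in particular `H` is non-degenerate. -/
theorem stmt16 {k H : Type} [Field k] [Ring H] [HopfAlgebra k H] [FiniteDimensional k H]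
    {ι : Type} (s : Finset ι) (a b : ι → H)
    (hflip : ∀ h : H,
      ((TensorProduct.comm k H H) (Coalgebra.comul (R := k) h)) * Rmat s a b
        = Rmat s a b * Coalgebra.comul (R := k) h)
    (hhex1 :
      (TensorProduct.map (Coalgebra.comul (R := k) (A := H)) LinearMap.id) (Rmat s a b)
        = (TensorProduct.map (Algebra.TensorProduct.includeLeft :
              H →ₐ[k] H ⊗[k] H).toLinearMap LinearMap.id (Rmat s a b)) *
          (TensorProduct.map (Algebra.TensorProduct.includeRight :
              H →ₐ[k] H ⊗[k] H).toLinearMap LinearMap.id (Rmat s a b)))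
    (hhex2 :
      (TensorProduct.map LinearMap.id (Coalgebra.comul (R := k) (A := H))) (Rmat s a b)
        = (TensorProduct.map LinearMap.id (Algebra.TensorProduct.includeRight :
              H →ₐ[k] H ⊗[k] H).toLinearMap (Rmat s a b)) *
          (TensorProduct.map LinearMap.id (Algebra.TensorProduct.includeLeft :
              H →ₐ[k] H ⊗[k] H).toLinearMap (Rmat s a b)))
    (v vinv : H)
    (hv1 : v * vinv = 1) (hv2 : vinv * v = 1)
    (hvc : ∀ x : H, x * v = v * x)
    (hSv : HopfAlgebra.antipode (R := k) v = v)
    (hεv : Coalgebra.counit (R := k) v = 1)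
    (hΔv : Coalgebra.comul (R := k) v *
        (((TensorProduct.comm k H H) (Rmat s a b)) * Rmat s a b) = v ⊗ₜ[k] v)
    (lam : H →ₗ[k] k)
    (hri : ∀ f : H →ₗ[k] k, conv f lam = f 1 • lam)
    (Λ : H)
    (hco : ∀ x : H, x * Λ = Coalgebra.counit (R := k) x • Λ)
    (hnorm : lam Λ = 1)
    (ψinv : H → (H →ₗ[k] k))
    (hψ1 : ∀ f : H →ₗ[k] k, ψinv (drinfeld s a b f) = f)
    (hψ2 : ∀ x : H, drinfeld s a b (ψinv x) = x)
    (ζ : k) (hζ : drinfeld s a b lam = ζ • Λ) :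
    lam v * lam vinv = ζ ∧ ζ ≠ 0 := by
  classical
  -- counit of vinv is 1
  have hεvinv : Coalgebra.counit (R := k) vinv = 1 := by
    have h : Coalgebra.counit (R := k) (v * vinv) = 1 := by
      rw [hv1, Bialgebra.counit_one]
    rwa [Bialgebra.counit_mul, hεv, one_mul] at h
  -- vinv is central
  have hvinvc : ∀ x : H, x * vinv = vinv * x := by
    intro x
    have : vinv * (x * v) * vinv = vinv * (v * x) * vinv := by rw [hvc]
    calc x * vinv = vinv * (v * x) * vinv := by
          rw [← mul_assoc vinv v x, hv2, one_mul]
      _ = vinv * (x * v) * vinv := by rw [hvc]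
      _ = vinv * x * (v * vinv) := by rw [mul_assoc, mul_assoc, mul_assoc]
      _ = vinv * x := by rw [hv1, mul_one]
  -- the map L : H ⊗ H → H, x ⊗ y ↦ lam x • y
  set L : H ⊗[k] H →ₗ[k] H :=
    TensorProduct.lift ((LinearMap.lsmul k H) ∘ₗ lam) with hL
  have hLt : ∀ x y : H, L (x ⊗ₜ[k] y) = lam x • y := fun x y => rfl
  -- drinfeld lam = L M
  have hM : (TensorProduct.comm k H H) (Rmat s a b) * Rmat s a b
      = ∑ j ∈ s, ∑ i ∈ s, (b j * a i) ⊗ₜ[k] (a j * b i) := by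
    simp only [Rmat, map_sum, TensorProduct.comm_tmul, Finset.sum_mul_sum,
      Algebra.TensorProduct.tmul_mul_tmul]
  have hz : drinfeld s a b lam
      = L ((TensorProduct.comm k H H) (Rmat s a b) * Rmat s a b) := by
    rw [hM, map_sum]
    rw [drinfeld, Finset.sum_comm]
    refine Finset.sum_congr rfl fun j _ => ?_
    rw [map_sum]
    refine Finset.sum_congr rfl fun i _ => ?_
    rw [hLt]
  -- M = comul vinv * (v ⊗ v)
  have hcc : Coalgebra.comul (R := k) vinv * Coalgebra.comul (R := k) v = 1 := by
    rw [← Bialgebra.comul_mul, hv2, Bialgebra.comul_one]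
  have hMv : Coalgebra.comul (R := k) vinv * (v ⊗ₜ[k] v)
      = (TensorProduct.comm k H H) (Rmat s a b) * Rmat s a b := by
    rw [← hΔv, ← mul_assoc, hcc, one_mul]
  -- auxiliary lemmas about L
  have lemL1 : ∀ w : H ⊗[k] H, L (w * ((1 : H) ⊗ₜ[k] v)) = L w * v := by
    intro w
    induction w using TensorProduct.induction_on with
    | zero => simp
    | tmul x y =>
        rw [Algebra.TensorProduct.tmul_mul_tmul, hLt, hLt, mul_one, smul_mul_assoc]
    | add x y hx hy => rw [add_mul, map_add, hx, hy, map_add, add_mul]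
  set g : H →ₗ[k] k := lam ∘ₗ (LinearMap.mulRight k v) with hg
  have lemL2 : ∀ w : H ⊗[k] H, lam (L (w * (v ⊗ₜ[k] (1 : H)))) =
      (LinearMap.mul' k k) ((TensorProduct.map g lam) w) := by
    intro w
    induction w using TensorProduct.induction_on with
    | zero => simp
    | tmul x y =>
        rw [Algebra.TensorProduct.tmul_mul_tmul, hLt, mul_one, map_smul,
          TensorProduct.map_tmul, LinearMap.mul'_apply, smul_eq_mul]
        rw [hg]; rfl
    | add x y hx hy =>
        rw [add_mul, map_add, map_add, map_add, map_add, hx, hy]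
  -- N
  set N : H := L (Coalgebra.comul (R := k) vinv * (v ⊗ₜ[k] (1 : H))) with hNdef
  have hsplit : (v ⊗ₜ[k] v : H ⊗[k] H) = (v ⊗ₜ[k] (1 : H)) * ((1 : H) ⊗ₜ[k] v) := by
    rw [Algebra.TensorProduct.tmul_mul_tmul, mul_one, one_mul]
  have hzNv : drinfeld s a b lam = N * v := by
    rw [hz, ← hMv, hsplit, ← mul_assoc, lemL1]
  have hN : N = ζ • Λ := by
    have h1 : N = drinfeld s a b lam * vinv := by
      rw [hzNv, mul_assoc, hv1, mul_one]
    rw [h1, hζ, smul_mul_assoc, hvinvc Λ, hco vinv, hεvinv, one_smul]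
  have hlamN : lam N = ζ := by rw [hN, map_smul, hnorm, smul_eq_mul, mul_one]
  have hg1 : g 1 = lam v := by rw [hg]; simp [LinearMap.mulRight_apply]
  have hmain : lam v * lam vinv = ζ := by
    have h2 := lemL2 (Coalgebra.comul (R := k) vinv)
    have h4 : conv g lam vinv = g 1 * lam vinv := by
      rw [hri g, LinearMap.smul_apply, smul_eq_mul]
    have h3 : conv g lam vinv
        = (LinearMap.mul' k k) ((TensorProduct.map g lam) (Coalgebra.comul (R := k) vinv)) := rfl
    rw [← hg1, ← h4, h3, ← h2, ← hNdef, hlamN]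
  refine ⟨hmain, ?_⟩
  intro h0
  have hd0 : drinfeld s a b lam = 0 := by rw [hζ, h0, zero_smul]
  have hd0' : drinfeld s a b (0 : H →ₗ[k] k) = 0 := by simp [drinfeld]
  have hlam0 : lam = (0 : H →ₗ[k] k) := by
    have e1 := hψ1 lam
    have e2 := hψ1 (0 : H →ₗ[k] k)
    rw [hd0] at e1
    rw [hd0'] at e2
    rw [← e1, e2]
  rw [hlam0] at hnorm
  simp at hnorm
end

section
/- Let H be a finite-dimensional unimodular ribbon Hopf algebra with right integral λ, left cointegral Λ (λ(Λ)=1), and pivotal element g. Define the modified-trace functional t_H on End_{H-mod}(H) by t_H(f) = λ(g·f(1_H)). Then t_H(Λ∘ε) = 1, where Λ∘ε denotes the H-module endomorphism of the regular representation H sending x to ε(x)·Λ. Moreover t_H is a trace on End_{H-mod}(H): t_H(f∘f') = t_H(f'∘f) for all H-module endomorphisms f, f' of H. -/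
/-- Let `H` be a finite-dimensional unimodular ribbon Hopf algebra with right integral `λ`
(a quantum character), left cointegral `Λ` with `λ(Λ) = 1`, and pivotal element `g`
(invertible, `ε(g) = 1`, `S²(x) = g x g⁻¹`). Define `t_H(f) = λ(g * f(1))` on `H`-module
endomorphisms of the regular representation `H`. Then `t_H(Λ ∘ ε) = 1`, and `t_H` is a trace:
`t_H(f ∘ f') = t_H(f' ∘ f)` for all `H`-module endomorphisms `f, f'` of `H`. -/
theorem stmt17 {k H : Type} [Field k] [Ring H] [HopfAlgebra k H] [FiniteDimensional k H]
    (lam : H →ₗ[k] k)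
    (hqc : ∀ a b : H, lam (a * b) =
      lam (HopfAlgebra.antipode (R := k) (HopfAlgebra.antipode (R := k) b) * a))
    (Λ : H)
    (hleft : ∀ x : H, x * Λ = Coalgebra.counit (R := k) x • Λ)
    (hnorm : lam Λ = 1)
    (g ginv : H)
    (hg1 : g * ginv = 1) (hg2 : ginv * g = 1)
    (hεg : Coalgebra.counit (R := k) g = 1)
    (hpiv : ∀ x : H, HopfAlgebra.antipode (R := k) (HopfAlgebra.antipode (R := k) x)
      = g * x * ginv) :
    lam (g * Λ) = 1 ∧
    (∀ f f' : H →ₗ[k] H,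
      (∀ a x : H, f (a * x) = a * f x) → (∀ a x : H, f' (a * x) = a * f' x) →
      lam (g * f (f' 1)) = lam (g * f' (f 1))) := by
  constructor
  · have := hleft g
    rw [hεg, one_smul] at this
    rw [this, hnorm]
  · intro f f' hf hf'
    have hfx : ∀ x : H, f x = x * f 1 := fun x => by
      conv_lhs => rw [← mul_one x]
      rw [hf]
    have hfx' : ∀ x : H, f' x = x * f' 1 := fun x => by
      conv_lhs => rw [← mul_one x]
      rw [hf']
    rw [hfx (f' 1), hfx' (f 1)]
    set a := f 1; set b := f' 1
    have key : ∀ u v : H, lam (g * (u * v)) = lam (g * (v * u)) := by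
      intro u v
      have h1 : lam (g * u * v) = lam ((g * v * ginv) * (g * u)) := by
        rw [← hpiv v]; exact hqc (g * u) v
      calc lam (g * (u * v)) = lam (g * u * v) := by rw [mul_assoc]
        _ = lam ((g * v * ginv) * (g * u)) := h1
        _ = lam (g * (v * u)) := by
            congr 1
            calc g * v * ginv * (g * u) = g * v * (ginv * g) * u := by noncomm_ring
              _ = g * (v * u) := by rw [hg2]; noncomm_ring
    exact key b a
end
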